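/- The group obtained from the presentation ⟨a, b, c | a² = b² = c² = (ab)³ = (bc)³ = (ca)³ = (abac)² = 1⟩ is isomorphic to the symmetric group S₄. -/
import Mathlib


/-- Relations ⟨a,b,c | a²=b²=c²=(ab)³=(bc)³=(ca)³=(abac)²=1⟩. -/
def s4Rels : Set (FreeGroup (Fin 3)) :=
  { (FreeGroup.of 0) ^ 2, (FreeGroup.of 1) ^ 2, (FreeGroup.of 2) ^ 2,
    (FreeGroup.of 0 * FreeGroup.of 1) ^ 3,
    (FreeGroup.of 1 * FreeGroup.of 2) ^ 3,
    (FreeGroup.of 2 * FreeGroup.of 0) ^ 3,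
    (FreeGroup.of 0 * FreeGroup.of 1 * FreeGroup.of 0 * FreeGroup.of 2) ^ 2 }

namespace S4Aux

abbrev P := PresentedGroup s4Rels

def A : P := PresentedGroup.of 0
def B : P := PresentedGroup.of 1
def C : P := PresentedGroup.of 2

lemma relmk (r : FreeGroup (Fin 3)) (hr : r ∈ s4Rels) : PresentedGroup.mk s4Rels r = 1 :=
  (QuotientGroup.eq_one_iff r).mpr (Subgroup.subset_normalClosure hr)

lemma hA : A * A = 1 := by
  have h := relmk ((FreeGroup.of 0) ^ 2) (by simp [s4Rels])
  rw [map_pow, sq] at h; exact h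

lemma hB : B * B = 1 := by
  have h := relmk ((FreeGroup.of 1) ^ 2) (by simp [s4Rels])
  rw [map_pow, sq] at h; exact h

lemma hC : C * C = 1 := by
  have h := relmk ((FreeGroup.of 2) ^ 2) (by simp [s4Rels])
  rw [map_pow, sq] at h; exact h

lemma hAB3 : (A * B) ^ 3 = 1 := by
  have h := relmk ((FreeGroup.of 0 * FreeGroup.of 1) ^ 3) (by simp [s4Rels])
  rw [map_pow, map_mul] at h; exact h

lemma hBC3 : (B * C) ^ 3 = 1 := by
  have h := relmk ((FreeGroup.of 1 * FreeGroup.of 2) ^ 3) (by simp [s4Rels])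
  rw [map_pow, map_mul] at h; exact h

lemma hCA3 : (C * A) ^ 3 = 1 := by
  have h := relmk ((FreeGroup.of 2 * FreeGroup.of 0) ^ 3) (by simp [s4Rels])
  rw [map_pow, map_mul] at h; exact h

lemma hr7 : (A * B * A * C) ^ 2 = 1 := by
  have h := relmk ((FreeGroup.of 0 * FreeGroup.of 1 * FreeGroup.of 0 * FreeGroup.of 2) ^ 2)
    (by simp [s4Rels])
  rw [map_pow, map_mul, map_mul, map_mul] at h; exact h

section helpers
variable {G : Type*} [Group G]

lemma braid {x y : G} (hx : x * x = 1) (hy : y * y = 1) (h : (x * y) ^ 3 = 1) :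
    x * y * x = y * x * y := by
  have h' : (x * y) * (x * y) * (x * y) = 1 := by
    rw [pow_succ, pow_succ, pow_one] at h; exact h
  have h1 : (x * y * x) * (y * x * y) = 1 := by
    rw [show (x * y * x) * (y * x * y) = (x * y) * (x * y) * (x * y) by group]; exact h'
  have hxi : x⁻¹ = x := inv_eq_of_mul_eq_one_right hx
  have hyi : y⁻¹ = y := inv_eq_of_mul_eq_one_right hy
  have h2 : x * y * x = (y * x * y)⁻¹ := eq_inv_of_mul_eq_one_left h1
  rw [h2, mul_inv_rev, mul_inv_rev, hxi, hyi]
  exact (mul_assoc y x y).symm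

lemma sq_comm {x y : G} (hx : x * x = 1) (hy : y * y = 1) (h : (x * y) * (x * y) = 1) :
    x * y = y * x := by
  have h1 : x * y = (x * y)⁻¹ := eq_inv_of_mul_eq_one_left h
  have hxi : x⁻¹ = x := inv_eq_of_mul_eq_one_right hx
  have hyi : y⁻¹ = y := inv_eq_of_mul_eq_one_right hy
  rw [h1, mul_inv_rev, hxi, hyi]

end helpers

lemma hab : A * B * A = B * A * B := braid hA hB hAB3
lemma hbc : B * C * B = C * B * C := braid hB hC hBC3
lemma hca : C * A * C = A * C * A := braid hC hA hCA3

lemma hX2 : (A * B * A * C) * (A * B * A * C) = 1 := by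
  rw [← sq]; exact hr7

/-- `A` commutes with `BCB`. -/
lemma I1 : A * (B * C * B) = (B * C * B) * A := by
  have e1 : A * (B * C * B) = B * ((A * B * A * C) * B) := by
    calc A * (B * C * B) = A * (B * (1 : P) * (C * B)) := by group
      _ = A * (B * (A * A) * (C * B)) := by rw [hA]
      _ = (A * B * A) * (A * (C * B)) := by group
      _ = (B * A * B) * (A * (C * B)) := by rw [hab]
      _ = B * ((A * B * A * C) * B) := by group
  have hBCB2 : (B * C * B) * (B * C * B) = 1 := by
    calc (B * C * B) * (B * C * B) = B * (C * ((B * B) * (C * B))) := by group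
      _ = B * (C * ((1 : P) * (C * B))) := by rw [hB]
      _ = B * ((C * C) * B) := by group
      _ = B * ((1 : P) * B) := by rw [hC]
      _ = B * B := by group
      _ = 1 := hB
  have hsq : (A * (B * C * B)) * (A * (B * C * B)) = 1 := by
    rw [e1]
    calc (B * ((A * B * A * C) * B)) * (B * ((A * B * A * C) * B))
        = B * ((A * B * A * C) * ((B * B) * ((A * B * A * C) * B))) := by group
      _ = B * ((A * B * A * C) * ((1 : P) * ((A * B * A * C) * B))) := by rw [hB]
      _ = B * (((A * B * A * C) * (A * B * A * C)) * B) := by group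
      _ = B * ((1 : P) * B) := by rw [hX2]
      _ = B * B := by group
      _ = 1 := hB
  exact sq_comm hA hBCB2 hsq

/-- `B` commutes with `ACA`. -/
lemma I2 : B * (A * C * A) = (A * C * A) * B := by
  have e2 : B * (A * C * A) = A * ((A * B * A * C) * A) := by
    have h : A * ((A * B * A * C) * A) = B * (A * C * A) := by
      calc A * ((A * B * A * C) * A) = (A * A) * (B * (A * C * A)) := by group
        _ = (1 : P) * (B * (A * C * A)) := by rw [hA]
        _ = B * (A * C * A) := one_mul _
    exact h.symm
  have hACA2 : (A * C * A) * (A * C * A) = 1 := by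
    calc (A * C * A) * (A * C * A) = A * (C * ((A * A) * (C * A))) := by group
      _ = A * (C * ((1 : P) * (C * A))) := by rw [hA]
      _ = A * ((C * C) * A) := by group
      _ = A * ((1 : P) * A) := by rw [hC]
      _ = A * A := by group
      _ = 1 := hA
  have hsq : (B * (A * C * A)) * (B * (A * C * A)) = 1 := by
    rw [e2]
    calc (A * ((A * B * A * C) * A)) * (A * ((A * B * A * C) * A))
        = A * ((A * B * A * C) * ((A * A) * ((A * B * A * C) * A))) := by group
      _ = A * ((A * B * A * C) * ((1 : P) * ((A * B * A * C) * A))) := by rw [hA]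
      _ = A * (((A * B * A * C) * (A * B * A * C)) * A) := by group
      _ = A * ((1 : P) * A) := by rw [hX2]
      _ = A * A := by group
      _ = 1 := hA
  exact sq_comm hB hACA2 hsq

/-! ### Normal-form data -/

def kk : Fin 4 → P
  | 0 => C
  | 1 => A * C * A
  | 2 => B * C * B
  | 3 => 1

def ss : Fin 3 → P
  | 0 => B
  | 1 => A * B * A
  | 2 => 1

def tt : Bool → P
  | true => A
  | false => 1

abbrev idx := Fin 4 × Fin 3 × Bool

def f (x : idx) : P := kk x.1 * ss x.2.1 * tt x.2.2

/- K-level lemmas -/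
lemma KA0 : A * kk 0 = kk 1 * A := by
  show A * C = (A * C * A) * A
  calc A * C = (A * C) * (1 : P) := by group
    _ = (A * C) * (A * A) := by rw [hA]
    _ = (A * C * A) * A := by group

lemma KA1 : A * kk 1 = kk 0 * A := by
  show A * (A * C * A) = C * A
  calc A * (A * C * A) = (A * A) * (C * A) := by group
    _ = (1 : P) * (C * A) := by rw [hA]
    _ = C * A := one_mul _

lemma KA2 : A * kk 2 = kk 2 * A := I1

lemma KA3 : A * kk 3 = kk 3 * A := by show A * 1 = 1 * A; group

lemma KB0 : B * kk 0 = kk 2 * B := by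
  show B * C = (B * C * B) * B
  calc B * C = (B * C) * (1 : P) := by group
    _ = (B * C) * (B * B) := by rw [hB]
    _ = (B * C * B) * B := by group

lemma KB1 : B * kk 1 = kk 1 * B := I2

lemma KB2 : B * kk 2 = kk 0 * B := by
  show B * (B * C * B) = C * B
  calc B * (B * C * B) = (B * B) * (C * B) := by group
    _ = (1 : P) * (C * B) := by rw [hB]
    _ = C * B := one_mul _

lemma KB3 : B * kk 3 = kk 3 * B := by show B * 1 = 1 * B; group

lemma KC0 : C * kk 0 = kk 3 * (1 : P) := by
  show C * C = 1 * (1 : P); rw [hC, one_mul]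

lemma KC1 : C * kk 1 = kk 1 * A := by
  show C * (A * C * A) = (A * C * A) * A
  calc C * (A * C * A) = (C * A * C) * A := by group
    _ = (A * C * A) * A := by rw [hca]

lemma KC2 : C * kk 2 = kk 2 * B := by
  show C * (B * C * B) = (B * C * B) * B
  calc C * (B * C * B) = (C * B * C) * B := by group
    _ = (B * C * B) * B := by rw [hbc]

lemma KC3 : C * kk 3 = kk 0 * (1 : P) := by
  show C * 1 = C * 1; rfl

/- S-level lemmas -/
lemma SA0 : A * ss 0 = ss 1 * A := by
  show A * B = (A * B * A) * A
  calc A * B = (A * B) * (1 : P) := by group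
    _ = (A * B) * (A * A) := by rw [hA]
    _ = (A * B * A) * A := by group

lemma SA1 : A * ss 1 = ss 0 * A := by
  show A * (A * B * A) = B * A
  calc A * (A * B * A) = (A * A) * (B * A) := by group
    _ = (1 : P) * (B * A) := by rw [hA]
    _ = B * A := one_mul _

lemma SA2 : A * ss 2 = ss 2 * A := by show A * 1 = 1 * A; group

lemma SB0 : B * ss 0 = ss 2 * (1 : P) := by
  show B * B = 1 * (1 : P); rw [hB, one_mul]

lemma SB1 : B * ss 1 = ss 1 * A := by
  show B * (A * B * A) = (A * B * A) * A
  calc B * (A * B * A) = (B * A * B) * A := by group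
    _ = (A * B * A) * A := by rw [hab]

lemma SB2 : B * ss 2 = ss 0 * (1 : P) := by
  show B * 1 = B * 1; rfl

/- T-level lemmas -/
lemma resT1 : ∀ i : Bool, ∃ i', (1 : P) * tt i = tt i' := fun i => ⟨i, one_mul _⟩

lemma resTA : ∀ i : Bool, ∃ i', A * tt i = tt i' := by
  intro i
  cases i
  · exact ⟨true, mul_one A⟩
  · exact ⟨false, hA⟩

lemma stepS {g r : P} {j j' : Fin 3} (h : g * ss j = ss j' * r)
    (hr : ∀ i, ∃ i', r * tt i = tt i') (i : Bool) :
    ∃ j'' i'', g * (ss j * tt i) = ss j'' * tt i'' := by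
  obtain ⟨i', hi⟩ := hr i
  exact ⟨j', i', by rw [← mul_assoc, h, mul_assoc, hi]⟩

lemma resA : ∀ (j : Fin 3) (i : Bool), ∃ j' i', A * (ss j * tt i) = ss j' * tt i' := by
  intro j i
  fin_cases j
  · exact stepS SA0 resTA i
  · exact stepS SA1 resTA i
  · exact stepS SA2 resTA i

lemma resB : ∀ (j : Fin 3) (i : Bool), ∃ j' i', B * (ss j * tt i) = ss j' * tt i' := by
  intro j i
  fin_cases j
  · exact stepS SB0 resT1 i
  · exact stepS SB1 resTA i
  · exact stepS SB2 resT1 i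

lemma res1 : ∀ (j : Fin 3) (i : Bool), ∃ j' i', (1 : P) * (ss j * tt i) = ss j' * tt i' :=
  fun j i => ⟨j, i, one_mul _⟩

lemma stepK {g r : P} {k k' : Fin 4} (h : g * kk k = kk k' * r)
    (hr : ∀ j i, ∃ j' i', r * (ss j * tt i) = ss j' * tt i') (j : Fin 3) (i : Bool) :
    ∃ y : idx, g * f (k, j, i) = f y := by
  obtain ⟨j', i', hji⟩ := hr j i
  refine ⟨(k', j', i'), ?_⟩
  show g * (kk k * ss j * tt i) = kk k' * ss j' * tt i'
  calc g * (kk k * ss j * tt i) = (g * kk k) * (ss j * tt i) := by group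
    _ = (kk k' * r) * (ss j * tt i) := by rw [h]
    _ = kk k' * (r * (ss j * tt i)) := by group
    _ = kk k' * (ss j' * tt i') := by rw [hji]
    _ = kk k' * ss j' * tt i' := by group

lemma mulGen (g : Fin 3) (x : idx) :
    ∃ y, (PresentedGroup.of (rels := s4Rels) g) * f x = f y := by
  obtain ⟨k, j, i⟩ := x
  fin_cases g
  · fin_cases k
    · exact stepK KA0 resA j i
    · exact stepK KA1 resA j i
    · exact stepK KA2 resA j i
    · exact stepK KA3 resA j i
  · fin_cases k
    · exact stepK KB0 resB j i
    · exact stepK KB1 resB j i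
    · exact stepK KB2 resB j i
    · exact stepK KB3 resB j i
  · fin_cases k
    · exact stepK KC0 res1 j i
    · exact stepK KC1 resA j i
    · exact stepK KC2 resB j i
    · exact stepK KC3 res1 j i

lemma geninv (g : Fin 3) :
    (PresentedGroup.of (rels := s4Rels) g)⁻¹ = PresentedGroup.of g := by
  fin_cases g
  · exact inv_eq_of_mul_eq_one_right hA
  · exact inv_eq_of_mul_eq_one_right hB
  · exact inv_eq_of_mul_eq_one_right hC

lemma f_one : f (3, 2, false) = 1 := by
  show kk 3 * ss 2 * tt false = 1
  show (1 : P) * 1 * 1 = 1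
  group

lemma fsurj (p : P) : ∃ x, f x = p := by
  have aux : ∀ z : FreeGroup (Fin 3), ∀ x : idx,
      ∃ y, PresentedGroup.mk s4Rels z * f x = f y := by
    intro z
    refine FreeGroup.induction_on
      (C := fun z => ∀ x : idx, ∃ y : idx, PresentedGroup.mk s4Rels z * f x = f y)
      z ?_ ?_ ?_ ?_
    · intro x; exact ⟨x, by rw [map_one, one_mul]⟩
    · intro g x; exact mulGen g x
    · intro g _ x
      have h1 : PresentedGroup.mk s4Rels ((FreeGroup.of g)⁻¹)
          = PresentedGroup.of (rels := s4Rels) g := by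
        rw [map_inv]; exact geninv g
      show ∃ y, PresentedGroup.mk s4Rels ((FreeGroup.of g)⁻¹) * f x = f y
      rw [h1]
      exact mulGen g x
    · intro z1 z2 h1 h2 x
      obtain ⟨y1, hy1⟩ := h2 x
      obtain ⟨y2, hy2⟩ := h1 y1
      exact ⟨y2, by rw [map_mul, mul_assoc, hy1, hy2]⟩
  obtain ⟨z, rfl⟩ := PresentedGroup.mk_surjective s4Rels p
  obtain ⟨y, hy⟩ := aux z (3, 2, false)
  rw [f_one, mul_one] at hy
  exact ⟨y, hy.symm⟩

/-! ### The evaluation homomorphism to S₄ -/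

def τ : Fin 3 → Equiv.Perm (Fin 4) := fun i => Equiv.swap 0 i.succ

lemma hrels : ∀ r ∈ s4Rels, FreeGroup.lift τ r = 1 := by
  intro r hr
  simp only [s4Rels, Set.mem_insert_iff, Set.mem_singleton_iff] at hr
  rcases hr with rfl | rfl | rfl | rfl | rfl | rfl | rfl <;>
    · simp only [map_pow, map_mul, FreeGroup.lift_apply_of]
      decide

def φ : P →* Equiv.Perm (Fin 4) := PresentedGroup.toGroup hrels

def pkk : Fin 4 → Equiv.Perm (Fin 4)
  | 0 => τ 2
  | 1 => τ 0 * τ 2 * τ 0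
  | 2 => τ 1 * τ 2 * τ 1
  | 3 => 1

def pss : Fin 3 → Equiv.Perm (Fin 4)
  | 0 => τ 1
  | 1 => τ 0 * τ 1 * τ 0
  | 2 => 1

def ptt : Bool → Equiv.Perm (Fin 4)
  | true => τ 0
  | false => 1

def pf (x : idx) : Equiv.Perm (Fin 4) := pkk x.1 * pss x.2.1 * ptt x.2.2

lemma φf : ∀ x : idx, φ (f x) = pf x := by
  rintro ⟨k, j, i⟩
  fin_cases k <;> fin_cases j <;> cases i <;>
    simp [φ, f, pf, kk, ss, tt, pkk, pss, ptt, A, B, C]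

lemma psurj : ∀ σ : Equiv.Perm (Fin 4), ∃ x : idx, pf x = σ := by decide

lemma pinj : ∀ x y : idx, pf x = pf y → x = y := by decide

end S4Aux

/-- The presented group is isomorphic to the symmetric group S₄. -/
theorem presented_group_iso_S4 :
    Nonempty (PresentedGroup s4Rels ≃* Equiv.Perm (Fin 4)) := by
  have hinj : Function.Injective S4Aux.φ := by
    intro p q h
    obtain ⟨x, hx⟩ := S4Aux.fsurj p
    obtain ⟨y, hy⟩ := S4Aux.fsurj q
    rw [← hx, ← hy] at h ⊢
    rw [S4Aux.φf, S4Aux.φf] at h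
    rw [S4Aux.pinj x y h]
  have hsurj : Function.Surjective S4Aux.φ := by
    intro σ
    obtain ⟨x, hx⟩ := S4Aux.psurj σ
    exact ⟨S4Aux.f x, by rw [S4Aux.φf, hx]⟩
  exact ⟨MulEquiv.ofBijective S4Aux.φ ⟨hinj, hsurj⟩⟩
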